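/- (Leaf-addressing property of CQ normal forms) Let F be a term in CQ normal form, viewed as a binary tree built from pairing ⟨-,-⟩ with a shift at each leaf. If the shift S, read from left to right as a word in L and R, describes the position of a leaf of the tree of F at which the shift S' resides, then the CQ normal form of S*F is S', and for no proper initial segment S'' of S is the CQ normal form of S''*F a shift. -/

import Mathlib

/-- Terms of the free (quasi-)Cartesian monoid: constants `I, L, R`,
composition `comp` (written `*` in the paper) and pairing `pair`. -/
inductive Term : Type
  | I : Term
  | L : Term
  | R : Term
  | comp : Term → Term → Term
  | pair : Term → Term → Term
  deriving DecidableEq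

open Term

/-- The rewrite rules (1)-(7), indexed by their number. -/
inductive Rule : ℕ → Term → Term → Prop
  | r1 (x y : Term) : Rule 1 (comp L (pair x y)) x
  | r2 (x y : Term) : Rule 2 (comp R (pair x y)) y
  | r3 (x y z : Term) : Rule 3 (comp (pair x y) z) (pair (comp x z) (comp y z))
  | r4 (x : Term) : Rule 4 (comp I x) x
  | r5 (x : Term) : Rule 5 (comp x I) x
  | r6 (x : Term) : Rule 6 (pair (comp L x) (comp R x)) x
  | r7 : Rule 7 (pair L R) I

/-- The congruence generated by associativity of `comp`. -/
inductive AssocEq : Term → Term → Prop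
  | assoc (a b c : Term) : AssocEq (comp (comp a b) c) (comp a (comp b c))
  | refl (a : Term) : AssocEq a a
  | symm {a b : Term} : AssocEq a b → AssocEq b a
  | trans {a b c : Term} : AssocEq a b → AssocEq b c → AssocEq a c
  | comp_congr {a a' b b' : Term} :
      AssocEq a a' → AssocEq b b' → AssocEq (comp a b) (comp a' b')
  | pair_congr {a a' b b' : Term} :
      AssocEq a a' → AssocEq b b' → AssocEq (pair a b) (pair a' b')

/-- One-step rewriting by a rule whose index lies in `J`,
closed under replacement of subterms (monotone closure). -/
inductive Step (J : Set ℕ) : Term → Term → Prop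
  | rule {n : ℕ} {x y : Term} : n ∈ J → Rule n x y → Step J x y
  | comp_left {a a' b : Term} : Step J a a' → Step J (comp a b) (comp a' b)
  | comp_right {a b b' : Term} : Step J b b' → Step J (comp a b) (comp a b')
  | pair_left {a a' b : Term} : Step J a a' → Step J (pair a b) (pair a' b)
  | pair_right {a b b' : Term} : Step J b b' → Step J (pair a b) (pair a b')

/-- One-step rewriting modulo associativity. -/
def StepA (J : Set ℕ) (a b : Term) : Prop :=
  ∃ a' b', AssocEq a a' ∧ Step J a' b' ∧ AssocEq b' b

/-- Many-step rewriting `↠_J`: the monotone reflexive transitive closure of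
one-step rewriting by the rules in `J`, modulo associativity. -/
def Red (J : Set ℕ) (a b : Term) : Prop :=
  ∃ c, Relation.ReflTransGen (StepA J) a c ∧ AssocEq c b

/-- `a` is in normal form w.r.t. the rules in `J` (modulo associativity). -/
def NF (J : Set ℕ) (a : Term) : Prop := ∀ b, ¬ StepA J a b

/-- Rules (1)-(7). -/
def rules17 : Set ℕ := {n | 1 ≤ n ∧ n ≤ 7}
/-- Rules (1)-(5). -/
def rules15 : Set ℕ := {n | 1 ≤ n ∧ n ≤ 5}
/-- Rules (1)-(4). -/
def rules14 : Set ℕ := {n | 1 ≤ n ∧ n ≤ 4}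
/-- Rules (5), (6), (7). -/
def rules567 : Set ℕ := {5, 6, 7}

/-- The congruence `=_CM` generated by the Cartesian monoid axioms (i)-(iv)
and the monoid axioms for `comp` with unit `I`. -/
inductive CMEq : Term → Term → Prop
  | proj_left (f g : Term) : CMEq (comp L (pair f g)) f
  | proj_right (f g : Term) : CMEq (comp R (pair f g)) g
  | lift (f g h : Term) : CMEq (comp (pair f g) h) (pair (comp f h) (comp g h))
  | surj : CMEq (pair L R) I
  | assoc (a b c : Term) : CMEq (comp (comp a b) c) (comp a (comp b c))
  | one_mul (a : Term) : CMEq (comp I a) a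
  | mul_one (a : Term) : CMEq (comp a I) a
  | refl (a : Term) : CMEq a a
  | symm {a b : Term} : CMEq a b → CMEq b a
  | trans {a b c : Term} : CMEq a b → CMEq b c → CMEq a c
  | comp_congr {a a' b b' : Term} :
      CMEq a a' → CMEq b b' → CMEq (comp a b) (comp a' b')
  | pair_congr {a a' b b' : Term} :
      CMEq a a' → CMEq b b' → CMEq (pair a b) (pair a' b')

/-- The congruence `=_CQ` generated by the axioms (i)-(iii)
and the monoid axioms (no surjectivity `⟨L,R⟩ = I`). -/
inductive CQEq : Term → Term → Prop
  | proj_left (f g : Term) : CQEq (comp L (pair f g)) f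
  | proj_right (f g : Term) : CQEq (comp R (pair f g)) g
  | lift (f g h : Term) : CQEq (comp (pair f g) h) (pair (comp f h) (comp g h))
  | assoc (a b c : Term) : CQEq (comp (comp a b) c) (comp a (comp b c))
  | one_mul (a : Term) : CQEq (comp I a) a
  | mul_one (a : Term) : CQEq (comp a I) a
  | refl (a : Term) : CQEq a a
  | symm {a b : Term} : CQEq a b → CQEq b a
  | trans {a b c : Term} : CQEq a b → CQEq b c → CQEq a c
  | comp_congr {a a' b b' : Term} :
      CQEq a a' → CQEq b b' → CQEq (comp a b) (comp a' b')
  | pair_congr {a a' b b' : Term} :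
      CQEq a a' → CQEq b b' → CQEq (pair a b) (pair a' b')

/-- An injective numerical encoding of terms, used to state computability. -/
def encodeTerm : Term → ℕ
  | I => 0
  | L => 1
  | R => 2
  | comp a b => 2 * Nat.pair (encodeTerm a) (encodeTerm b) + 3
  | pair a b => 2 * Nat.pair (encodeTerm a) (encodeTerm b) + 4

/-- A numerical encoding of finite lists of terms. -/
def encodeTermList : List Term → ℕ
  | [] => 0
  | a :: l => Nat.pair (encodeTerm a) (encodeTermList l) + 1

/-- The product of a list of terms (with `I` as the empty product). -/
def listProd : List Term → Term
  | [] => I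
  | a :: l => comp a (listProd l)

/-- `=_CQ` as a setoid. -/
def cqSetoid : Setoid Term :=
  ⟨CQEq, ⟨fun a => CQEq.refl a, fun h => h.symm, fun h₁ h₂ => h₁.trans h₂⟩⟩

/-- The free categorical quasiproduct monoid `CQ = T / =_CQ`. -/
def CQ : Type := Quotient cqSetoid

/-- `=_CM` as a setoid. -/
def cmSetoid : Setoid Term :=
  ⟨CMEq, ⟨fun a => CMEq.refl a, fun h => h.symm, fun h₁ h₂ => h₁.trans h₂⟩⟩

/-- The free Cartesian monoid `CM = T / =_CM`. -/
def CM : Type := Quotient cmSetoid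

/-- The submonoid of `CQ` generated by (the classes of) the members of `B`,
as a set of elements of `CQ`. -/
def genSubmonoidCQ (B : List Term) : Set CQ :=
  {x | ∃ l : List Term, (∀ t ∈ l, t ∈ B) ∧ Quotient.mk cqSetoid (listProd l) = x}

/-- The submonoid of `CM` generated by (the classes of) the members of `B`,
as a set of elements of `CM`. -/
def genSubmonoidCM (B : List Term) : Set CM :=
  {x | ∃ l : List Term, (∀ t ∈ l, t ∈ B) ∧ Quotient.mk cmSetoid (listProd l) = x}

/-- A shift: a product (under `comp`) of copies of `L` and `R`,
with `I` as the empty product. -/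
inductive IsShift : Term → Prop
  | unit : IsShift I
  | left : IsShift L
  | right : IsShift R
  | comp {s t : Term} : IsShift s → IsShift t → IsShift (comp s t)

/-- The CQ normal form (normal form w.r.t. rules (1)-(5)) of `X` is a shift. -/
def nfIsShift (X : Term) : Prop :=
  ∃ N, Red rules15 X N ∧ NF rules15 N ∧ IsShift N

/-- The product `F_0 * ⋯ * F_{n-1}` of the first `n` values of a sequence. -/
def prodTake (f : ℕ → Term) (n : ℕ) : Term := listProd ((List.range n).map f)

/-- `B` covers Cantor space: there is an infinite sequence of members of `B`
such that for each shift `S` some finite initial product composed with `S`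
has a CQ normal form that is not a shift. -/
def Covers (B : List Term) : Prop :=
  ∃ f : ℕ → Term, (∀ n, f n ∈ B) ∧
    ∀ S, IsShift S → ∃ n, ¬ nfIsShift (comp S (prodTake f n))

/-- The shift `S` is bad for `B`: for every finite sequence of members of `B`,
the CQ normal form of `S*F_1*⋯*F_n` is a shift. -/
def BadFor (B : List Term) (S : Term) : Prop :=
  ∀ l : List Term, (∀ t ∈ l, t ∈ B) → nfIsShift (comp S (listProd l))

/-- The length of a shift: the number of occurrences of `L` and `R`. -/
def lenLR : Term → ℕ
  | I => 0
  | L => 1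
  | R => 1
  | comp a b => lenLR a + lenLR b
  | pair a b => lenLR a + lenLR b

/-- `S` is extenuative for `B`: it is bad for `B` and the CQ normal forms of
`S*F_1*⋯*F_k` (for `F_i` in `B`) have unbounded length. -/
def Extenuative (B : List Term) (S : Term) : Prop :=
  BadFor B S ∧ ∀ n : ℕ, ∃ l : List Term, (∀ t ∈ l, t ∈ B) ∧
    ∃ N, Red rules15 (comp S (listProd l)) N ∧ NF rules15 N ∧ n ≤ lenLR N

/-- A term represents a right invertible element of CM. -/
def RightInvCM (F : Term) : Prop := ∃ G, CMEq (comp F G) I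

/-- `LeafAt w F S'` : reading the path `w` from the root of the binary tree of
`F` (`false` selects the left component of a pair, `true` the right one) leads
to a leaf at which the shift `S'` resides. -/
inductive LeafAt : List Bool → Term → Term → Prop
  | leaf {S' : Term} : IsShift S' → LeafAt [] S' S'
  | left {w : List Bool} {a S' : Term} (b : Term) :
      LeafAt w a S' → LeafAt (false :: w) (Term.pair a b) S'
  | right {w : List Bool} {b S' : Term} (a : Term) :
      LeafAt w b S' → LeafAt (true :: w) (Term.pair a b) S'

/-- The shift describing the leaf position `w`: the letters of the path
(`false ↦ L`, `true ↦ R`) composed so that the root step acts first. -/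
def pathShift : List Bool → Term
  | [] => Term.I
  | d :: w => Term.comp (pathShift w) (if d then Term.R else Term.L)

/-! Following the path letter by letter, rules (1) and (2) strip one pairing of `F` at a time, so
a prefix of the path reduces `S*F` to the subtree of `F` at that position; for a proper prefix this
subtree is a pair. A pair never reduces to a shift: let terms act on unlabelled binary trees, `L`
and `R` taking subtrees and pairing building a node. This model validates associativity and rules
(1)-(5), and shifts fix the empty tree whereas pairs never return it. -/

theorem Red.head {J : Set ℕ} {a b c : Term} (hab : StepA J a b) (hbc : Red J b c) :
    Red J a c :=
  let ⟨d, hbd, hdc⟩ := hbc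
  ⟨d, hbd.head hab, hdc⟩

theorem Red.refl (J : Set ℕ) (a : Term) : Red J a a :=
  ⟨a, .refl, .refl a⟩

theorem StepA.of_step {J : Set ℕ} {a b : Term} (h : Step J a b) : StepA J a b :=
  ⟨a, b, .refl a, h, .refl b⟩

theorem StepA.comp_assoc_of_step {J : Set ℕ} {P x y z : Term} (h : Step J (comp x y) z) :
    StepA J (comp (comp P x) y) (comp P z) :=
  ⟨comp P (comp x y), comp P z, .assoc P x y, .comp_right h, .refl _⟩

theorem NF.pair_left {J : Set ℕ} {a b : Term} (h : NF J (pair a b)) : NF J a := by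
  rintro c ⟨a', c', ha, hstep, -⟩
  exact h (pair c' b) ⟨pair a' b, pair c' b, .pair_congr ha (.refl b), .pair_left hstep, .refl _⟩

theorem NF.pair_right {J : Set ℕ} {a b : Term} (h : NF J (pair a b)) : NF J b := by
  rintro c ⟨b', c', hb, hstep, -⟩
  exact h (pair a c') ⟨pair a b', pair a c', .pair_congr (.refl a) hb, .pair_right hstep, .refl _⟩

def Term.denote : Term → BinaryTree Unit → BinaryTree Unit
  | I => id
  | L => BinaryTree.left
  | R => BinaryTree.right
  | comp a b => denote a ∘ denote b
  | pair a b => fun t => .node () (denote a t) (denote b t)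

theorem AssocEq.denote_eq {a b : Term} (h : AssocEq a b) : a.denote = b.denote := by
  induction h with
  | assoc | refl => rfl
  | symm _ ih => exact ih.symm
  | trans _ _ ih₁ ih₂ => exact ih₁.trans ih₂
  | comp_congr _ _ ih₁ ih₂ => simp only [Term.denote, ih₁, ih₂]
  | pair_congr _ _ ih₁ ih₂ => simp only [Term.denote, ih₁, ih₂]

theorem Rule.denote_eq {n : ℕ} {x y : Term} (hn : n ∈ rules15) (h : Rule n x y) :
    x.denote = y.denote := by
  cases h with
  | r1 | r2 | r3 | r4 | r5 => rfl
  | r6 | r7 => exact absurd hn.2 (by norm_num)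

theorem Step.denote_eq {a b : Term} (h : Step rules15 a b) : a.denote = b.denote := by
  induction h with
  | rule hn hr => exact hr.denote_eq hn
  | comp_left _ ih => simp only [Term.denote, ih]
  | comp_right _ ih => simp only [Term.denote, ih]
  | pair_left _ ih => simp only [Term.denote, ih]
  | pair_right _ ih => simp only [Term.denote, ih]

theorem StepA.denote_eq {a b : Term} (h : StepA rules15 a b) : a.denote = b.denote :=
  let ⟨_, _, h₁, h₂, h₃⟩ := h
  h₁.denote_eq.trans (h₂.denote_eq.trans h₃.denote_eq)

theorem Red.denote_eq {a b : Term} (h : Red rules15 a b) : a.denote = b.denote := by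
  obtain ⟨c, hac, hcb⟩ := h
  refine Eq.trans ?_ hcb.denote_eq
  clear hcb
  induction hac with
  | refl => rfl
  | tail _ hs ih => exact ih.trans hs.denote_eq

theorem IsShift.denote_nil {S : Term} (h : IsShift S) : S.denote .nil = .nil := by
  induction h with
  | unit | left | right => rfl
  | comp _ _ ihs iht => simp only [Term.denote, Function.comp_apply, iht, ihs]

theorem not_nfIsShift_of_red_pair {X a b : Term} (h : Red rules15 X (pair a b)) :
    ¬ nfIsShift X := by
  rintro ⟨N, hN, -, hshift⟩
  have := congrFun (hN.denote_eq.symm.trans h.denote_eq) .nil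
  rw [hshift.denote_nil] at this
  cases this

namespace LeafAt

theorem nf {J : Set ℕ} {w : List Bool} {F S' : Term} (h : LeafAt w F S') (hF : NF J F) :
    NF J S' := by
  induction h with
  | leaf => exact hF
  | left _ _ ih => exact ih hF.pair_left
  | right _ _ ih => exact ih hF.pair_right

theorem eq_of_nil {G S' : Term} (h : LeafAt [] G S') : G = S' := by
  cases h
  rfl

theorem exists_eq_pair {d : Bool} {w : List Bool} {G S' : Term} (h : LeafAt (d :: w) G S') :
    ∃ a b, G = pair a b := by
  cases h <;> exact ⟨_, _, rfl⟩

theorem exists_red_subtree {w₁ w₂ : List Bool} {F S' : Term} (h : LeafAt (w₁ ++ w₂) F S') :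
    ∃ G, Red rules15 (comp (pathShift w₁) F) G ∧ LeafAt w₂ G S' := by
  induction w₁ generalizing F with
  | nil =>
    exact ⟨F, Red.head (.of_step (.rule (by norm_num [rules15]) (.r4 F))) (.refl _ F), h⟩
  | cons d w₁ ih =>
    cases h with
    | left b ha =>
      obtain ⟨G, hred, hG⟩ := ih ha
      exact ⟨G, Red.head (.comp_assoc_of_step (.rule (by norm_num [rules15]) (.r1 _ b))) hred, hG⟩
    | right a hb =>
      obtain ⟨G, hred, hG⟩ := ih hb
      exact ⟨G, Red.head (.comp_assoc_of_step (.rule (by norm_num [rules15]) (.r2 a _))) hred, hG⟩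

end LeafAt

/-- Leaf-addressing property of CQ normal forms: if `F` is in CQ normal form
and the shift `S = pathShift w` describes the position of a leaf of `F` where
the shift `S'` resides, then the CQ normal form of `S*F` is `S'`, and for no
proper initial segment `w'` of the path is the CQ normal form of
`pathShift w' * F` a shift. -/
theorem leaf_addressing (F : Term) (w : List Bool) (S' : Term)
    (hF : NF rules15 F) (h : LeafAt w F S') :
    (Red rules15 (comp (pathShift w) F) S' ∧ NF rules15 S') ∧
    ∀ w' : List Bool, w' <+: w → w' ≠ w →
      ¬ nfIsShift (comp (pathShift w') F) := by
  refine ⟨⟨?_, h.nf hF⟩, ?_⟩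
  · obtain ⟨G, hred, hG⟩ := LeafAt.exists_red_subtree (w₂ := []) (by rwa [List.append_nil])
    rwa [hG.eq_of_nil] at hred
  · rintro w' ⟨_ | ⟨d, w₂⟩, rfl⟩ hne
    · exact absurd (List.append_nil w').symm hne
    · obtain ⟨G, hred, hG⟩ := h.exists_red_subtree
      obtain ⟨a, b, rfl⟩ := hG.exists_eq_pair
      exact not_nfIsShift_of_red_pair hred
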